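/- arXiv:1811.05626 — 5 statements merged into one kernel-verified Lean document; each statement's English description precedes it below -/
import Mathlib

section
/- Let d ≥ 1 and let χ be a d²×d² Hermitian positive semidefinite matrix with eigendecomposition χ = ∑_{j=1}^{d²} Λ_j u_j u_jᴴ, where Λ_j ≥ 0 and (u_j)_{j=1}^{d²} is an orthonormal basis of ℂ^{d²}. Define E_j := √(Λ_j) · ∑_{k=1}^{d²} (u_j)_k Ẽ_k, let √χ := ∑_j √(Λ_j) u_j u_jᴴ, for a d×d matrix ρ let ρ̃ denote the d²×d² matrix with entries ρ̃_{j,k} := tr(Ẽ_j ρ Ẽ_kᴴ), and let U := ∑_j ū_j e_jᴴ where ū_j is the entrywise complex conjugate of u_j and (e_j) is the standard basis of ℂ^{d²}. Then U is unitary, and for every d×d complex matrix ρ, U · ( ∑_{j,k} tr(E_j ρ E_kᴴ) e_j e_kᴴ ) · Uᴴ = (√χ)* ρ̃ (√χ)*, where (√χ)* denotes the entrywise complex conjugate of √χ. -/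
open Matrix BigOperators Finset
open scoped ComplexOrder

namespace Covert

noncomputable section

/-- Trace norm: sum of singular values of `X`, i.e. `tr √(Xᴴ X)`. -/
def traceNorm {n : Type*} [Fintype n] [DecidableEq n] (X : Matrix n n ℂ) : ℝ :=
  ∑ i, Real.sqrt ((Matrix.isHermitian_conjTranspose_mul_self X).eigenvalues i)

/-- Frobenius norm `√(tr (Xᴴ X))`. -/
def frobeniusNorm {n : Type*} [Fintype n] [DecidableEq n] (X : Matrix n n ℂ) : ℝ :=
  Real.sqrt ((Matrix.trace (Xᴴ * X)).re)

/-- smallest eigenvalue of a Hermitian matrix -/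
def eigMin {n : Type*} [Fintype n] [DecidableEq n] {A : Matrix n n ℂ}
    (hA : A.IsHermitian) : ℝ := ⨅ i, hA.eigenvalues i

/-- largest eigenvalue of a Hermitian matrix -/
def eigMax {n : Type*} [Fintype n] [DecidableEq n] {A : Matrix n n ℂ}
    (hA : A.IsHermitian) : ℝ := ⨆ i, hA.eigenvalues i

/-- largest singular value -/
def sigmaMax {n : Type*} [Fintype n] [DecidableEq n] (X : Matrix n n ℂ) : ℝ :=
  ⨆ i, Real.sqrt ((Matrix.isHermitian_conjTranspose_mul_self X).eigenvalues i)

/-- functional calculus `f(A)` for a Hermitian matrix `A`, extended by `0` junk value. -/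
def matFun {n : Type*} [Fintype n] [DecidableEq n] (f : ℝ → ℝ) (A : Matrix n n ℂ) :
    Matrix n n ℂ :=
  if hA : A.IsHermitian then hA.cfc f else 0

/-- matrix logarithm via functional calculus, with the convention `log 0 = 0`. -/
def matLog {n : Type*} [Fintype n] [DecidableEq n] (A : Matrix n n ℂ) : Matrix n n ℂ :=
  matFun Real.log A

/-- matrix real power via functional calculus (`0 ^ a = 0` for `a ≠ 0`). -/
def matPow {n : Type*} [Fintype n] [DecidableEq n] (A : Matrix n n ℂ) (a : ℝ) : Matrix n n ℂ :=
  matFun (fun x => x ^ a) A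

/-- von Neumann entropy `H(ρ) = -tr(ρ log ρ)`. -/
def vnEntropy {n : Type*} [Fintype n] [DecidableEq n] (ρ : Matrix n n ℂ) : ℝ :=
  -((ρ * matLog ρ).trace).re

/-- quantum relative entropy `D(ρ‖σ) = tr(ρ (log ρ - log σ))`. -/
def qRelEntropy {n : Type*} [Fintype n] [DecidableEq n] (ρ σ : Matrix n n ℂ) : ℝ :=
  ((ρ * (matLog ρ - matLog σ)).trace).re

/-- a density matrix: positive semidefinite with unit trace. -/
def IsDensity {n : Type*} [Fintype n] [DecidableEq n] (ρ : Matrix n n ℂ) : Prop :=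
  ρ.PosSemidef ∧ ρ.trace = 1

end

end Covert

open Covert

/-- The matrix units `|n⟩⟨m|` on `ℂ^d`, indexed by pairs `(n, m)`
(the pair `(n,m)` corresponds to the index `d(n-1)+m` of the paper). -/
noncomputable def Etilde {d : ℕ} (p : Fin d × Fin d) : Matrix (Fin d) (Fin d) ℂ :=
  Matrix.single p.1 p.2 1

/-! Let `W` be the matrix whose rows are the `u j` and `D = diag(√Λ j)`. Orthonormality of the
rows makes `U = Wᴴ` unitary. Since `E j = ∑ p, (D * W) j p • Ẽ p` and `(A, B) ↦ tr(A ρ Bᴴ)` is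
sesquilinear, `N = (D W) ρ̃ (D W)ᴴ`; and `(√χ)* = Wᴴ D W`. Hence
`U N Uᴴ = (Wᴴ D W) ρ̃ (Wᴴ D W)`, using only `Dᴴ = D`. -/

section

variable {ι κ n R : Type*} [Fintype ι] [CommSemiring R] [StarRing R]

def traceGram [Fintype n] (ρ : Matrix n n R) (F : ι → Matrix n n R) : Matrix ι ι R :=
  of fun j k => (F j * ρ * (F k)ᴴ).trace

theorem traceGram_sum_smul [Fintype n] (ρ : Matrix n n R) (C : Matrix κ ι R)
    (F : ι → Matrix n n R) :
    traceGram ρ (fun j => ∑ p, C j p • F p) = C * traceGram ρ F * Cᴴ := by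
  ext j k
  simp only [traceGram, of_apply, conjTranspose_sum, conjTranspose_smul, sum_mul, mul_sum,
    smul_mul, Matrix.mul_smul, trace_sum, trace_smul, mul_apply, conjTranspose_apply, smul_eq_mul]
  exact sum_congr rfl fun q _ => sum_congr rfl fun p _ => by ring

theorem map_star_sum_smul_vecMulVec [DecidableEq ι] (c : ι → R) (hc : ∀ j, star (c j) = c j)
    (v : ι → n → R) :
    (∑ j, c j • vecMulVec (v j) (star (v j))).map (starRingEnd R) =
      (of v)ᴴ * diagonal c * of v := by
  ext a b
  simp only [map_apply, Matrix.sum_apply, Matrix.smul_apply, vecMulVec_apply, Pi.star_apply,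
    smul_eq_mul, starRingEnd_apply, star_sum, star_mul', star_star, hc, mul_apply,
    conjTranspose_apply, of_apply, diagonal_apply, mul_ite, mul_zero, sum_ite_eq', mem_univ,
    if_true]
  exact sum_congr rfl fun j _ => by ring

end

theorem conjTranspose_of_mem_unitaryGroup {n R : Type*} [Fintype n] [DecidableEq n] [CommRing R]
    [StarRing R] (u : n → n → R) (hu : ∀ j k, star (u j) ⬝ᵥ u k = if j = k then 1 else 0) :
    (of u)ᴴ ∈ unitaryGroup n R := by
  rw [mem_unitaryGroup_iff', star_eq_conjTranspose, conjTranspose_conjTranspose]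
  ext j k
  rw [mul_apply', dotProduct_comm]
  exact (hu k j).trans (by simp only [one_apply, eq_comm])

theorem stmt6_general {d : ℕ}
    (Λ : Fin d × Fin d → ℝ)
    (u : Fin d × Fin d → (Fin d × Fin d → ℂ))
    (hortho : ∀ j k, star (u j) ⬝ᵥ u k = if j = k then 1 else 0)
    (E : Fin d × Fin d → Matrix (Fin d) (Fin d) ℂ)
    (hE : ∀ j, E j = Real.sqrt (Λ j) • ∑ k, u j k • Etilde k)
    (sqrtχ : Matrix (Fin d × Fin d) (Fin d × Fin d) ℂ)
    (hsqrtχ : sqrtχ = ∑ j, (Real.sqrt (Λ j) : ℂ) • Matrix.vecMulVec (u j) (star (u j)))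
    (U : Matrix (Fin d × Fin d) (Fin d × Fin d) ℂ)
    (hU : U = Matrix.of fun a b => star (u b a))
    (ρ : Matrix (Fin d) (Fin d) ℂ)
    (ρt : Matrix (Fin d × Fin d) (Fin d × Fin d) ℂ)
    (hρt : ρt = Matrix.of fun j k => (Etilde j * ρ * (Etilde k)ᴴ).trace)
    (N : Matrix (Fin d × Fin d) (Fin d × Fin d) ℂ)
    (hN : N = Matrix.of fun j k => (E j * ρ * (E k)ᴴ).trace) :
    U ∈ Matrix.unitaryGroup (Fin d × Fin d) ℂ ∧
    U * N * Uᴴ =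
      sqrtχ.map (starRingEnd ℂ) * ρt * sqrtχ.map (starRingEnd ℂ) := by
  set W := of u
  set D := diagonal fun j => (Real.sqrt (Λ j) : ℂ)
  have hUW : U = Wᴴ := hU
  have hD : Dᴴ = D := by simp [D, diagonal_conjTranspose, Pi.star_def]
  have hE' : E = fun j => ∑ p, (D * W) j p • Etilde p := by
    ext1 j
    rw [hE, smul_sum]
    refine sum_congr rfl fun p _ => ?_
    rw [← smul_assoc, Complex.real_smul, diagonal_mul]
    rfl
  have hN' : N = (D * W) * ρt * (D * W)ᴴ := by
    rw [hN, hρt, hE']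
    exact traceGram_sum_smul ρ (D * W) Etilde
  have hsqrtχ' : sqrtχ.map (starRingEnd ℂ) = Wᴴ * D * W := by
    rw [hsqrtχ]
    exact map_star_sum_smul_vecMulVec _ (fun j => Complex.conj_ofReal _) u
  refine ⟨hUW ▸ conjTranspose_of_mem_unitaryGroup u hortho, ?_⟩
  rw [hN', hUW, hsqrtχ', conjTranspose_mul, hD, conjTranspose_conjTranspose]
  simp only [Matrix.mul_assoc]

/-- up to the explicit unitary `U = ∑_j ū_j e_jᴴ`, the complementary-channel
matrix `[tr(E_j ρ E_kᴴ)]_{j,k}` equals `(√χ)* ρ̃ (√χ)*`. -/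
theorem stmt6 {d : ℕ} (hd : 1 ≤ d)
    (Λ : Fin d × Fin d → ℝ) (hΛ : ∀ j, 0 ≤ Λ j)
    (u : Fin d × Fin d → (Fin d × Fin d → ℂ))
    (hortho : ∀ j k, star (u j) ⬝ᵥ u k = if j = k then 1 else 0)
    (χ : Matrix (Fin d × Fin d) (Fin d × Fin d) ℂ)
    (hχ : χ = ∑ j, (Λ j : ℂ) • Matrix.vecMulVec (u j) (star (u j)))
    (E : Fin d × Fin d → Matrix (Fin d) (Fin d) ℂ)
    (hE : ∀ j, E j = Real.sqrt (Λ j) • ∑ k, u j k • Etilde k)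
    (sqrtχ : Matrix (Fin d × Fin d) (Fin d × Fin d) ℂ)
    (hsqrtχ : sqrtχ = ∑ j, (Real.sqrt (Λ j) : ℂ) • Matrix.vecMulVec (u j) (star (u j)))
    (U : Matrix (Fin d × Fin d) (Fin d × Fin d) ℂ)
    (hU : U = Matrix.of fun a b => star (u b a))
    (ρ : Matrix (Fin d) (Fin d) ℂ)
    (ρt : Matrix (Fin d × Fin d) (Fin d × Fin d) ℂ)
    (hρt : ρt = Matrix.of fun j k => (Etilde j * ρ * (Etilde k)ᴴ).trace)
    (N : Matrix (Fin d × Fin d) (Fin d × Fin d) ℂ)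
    (hN : N = Matrix.of fun j k => (E j * ρ * (E k)ᴴ).trace) :
    U ∈ Matrix.unitaryGroup (Fin d × Fin d) ℂ ∧
    U * N * Uᴴ =
      sqrtχ.map (starRingEnd ℂ) * ρt * sqrtχ.map (starRingEnd ℂ) :=
  stmt6_general Λ u hortho E hE sqrtχ hsqrtχ U hU ρ ρt hρt N hN
end

section
/- Let ρ0 be a positive definite density matrix on ℂ^d, ρ̄ a density matrix on ℂ^d, q ≥ 1, and for j ∈ {1,…,q} let ρ(j) := ρ0^{⊗(j−1)} ⊗ ρ̄ ⊗ ρ0^{⊗(q−j)}. Then tr( ( (1/q)·∑_{j=1}^q ρ(j) )² · (ρ0^{⊗q})⁻¹ ) − 1 = (1/q)·( tr(ρ̄²·ρ0⁻¹) − 1 ). -/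
open Matrix BigOperators Finset
open scoped ComplexOrder

open Covert

/-- Kronecker/tensor product of a family of `d × d` matrices, indexed by tuples. -/
noncomputable def tensorFam {q d : ℕ} (A : Fin q → Matrix (Fin d) (Fin d) ℂ) :
    Matrix (Fin q → Fin d) (Fin q → Fin d) ℂ :=
  Matrix.of fun i j => ∏ t, A t (i t) (j t)

/-! Tensor products multiply factorwise and their traces are products of traces, so each cross
term `tr (ρ(j) ρ(k) (ρ0^{⊗q})⁻¹)` is a product of single-site traces. Since `tr ρ0 = tr ρ̄ = 1`,
every site contributes `1` except when `j = k`, where the site `j` contributes `tr (ρ̄² ρ0⁻¹)`.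
Of the `q²` cross terms, the `q` diagonal ones give `tr (ρ̄² ρ0⁻¹)` and the rest give `1`. -/

section TensorFam

variable {q d : ℕ}

theorem tensorFam_mul (A B : Fin q → Matrix (Fin d) (Fin d) ℂ) :
    tensorFam A * tensorFam B = tensorFam fun t => A t * B t := by
  ext i j
  simp only [tensorFam, Matrix.mul_apply, Matrix.of_apply, Finset.prod_univ_sum,
    Finset.prod_mul_distrib]
  rfl

theorem tensorFam_one : (tensorFam fun _ : Fin q => (1 : Matrix (Fin d) (Fin d) ℂ)) = 1 := by
  ext i j
  simp only [tensorFam, Matrix.of_apply, Matrix.one_apply, Fintype.prod_boole]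
  simp [funext_iff]

theorem trace_tensorFam (A : Fin q → Matrix (Fin d) (Fin d) ℂ) :
    (tensorFam A).trace = ∏ t, (A t).trace := by
  simp only [Matrix.trace, Matrix.diag, tensorFam, Matrix.of_apply, Finset.prod_univ_sum]
  rfl

theorem inv_tensorFam {A : Fin q → Matrix (Fin d) (Fin d) ℂ} (hA : ∀ t, IsUnit (A t).det) :
    (tensorFam A)⁻¹ = tensorFam fun t => (A t)⁻¹ := by
  apply Matrix.inv_eq_right_inv
  simp only [tensorFam_mul, Matrix.mul_nonsing_inv _ (hA _), tensorFam_one]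

end TensorFam

theorem trace_smul_sum_mul_smul_sum_mul {ι n R : Type*} [Fintype ι] [Fintype n] [CommSemiring R]
    (a : R) (f : ι → Matrix n n R) (B : Matrix n n R) :
    ((a • ∑ j, f j) * (a • ∑ j, f j) * B).trace =
      a * a * ∑ j, ∑ k, (f j * f k * B).trace := by
  rw [Matrix.smul_mul, Matrix.mul_smul, Matrix.smul_mul, Matrix.smul_mul, smul_smul,
    Matrix.trace_smul, smul_eq_mul, Finset.sum_mul_sum]
  simp only [Finset.sum_mul, Matrix.trace_sum]

theorem sum_sum_ite_eq_else_one {ι R : Type*} [Fintype ι] [DecidableEq ι] [CommRing R]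
    (c : R) :
    ∑ j : ι, ∑ k : ι, (if j = k then c else 1) =
      Fintype.card ι * Fintype.card ι + Fintype.card ι * (c - 1) := by
  have split_diagonal : ∀ j k : ι, (if j = k then c else 1) = 1 + if j = k then c - 1 else 0 := by
    intro j k
    split_ifs <;> ring
  simp only [split_diagonal, Finset.sum_add_distrib, Finset.sum_ite_eq, Finset.mem_univ, if_true,
    Finset.sum_const, Finset.card_univ, nsmul_eq_mul, mul_one]

theorem trace_tensorFam_replace_mul_replace_mul_inv {q d : ℕ}
    {ρ0 σ : Matrix (Fin d) (Fin d) ℂ} (hρ0 : IsUnit ρ0.det) (htr0 : ρ0.trace = 1)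
    (htr : σ.trace = 1) (j k : Fin q) :
    ((tensorFam fun t => if t = j then σ else ρ0) * (tensorFam fun t => if t = k then σ else ρ0) *
      (tensorFam fun _ => ρ0)⁻¹).trace = if j = k then (σ * σ * ρ0⁻¹).trace else 1 := by
  have hinv : ρ0 * ρ0⁻¹ = 1 := Matrix.mul_nonsing_inv ρ0 hρ0
  have site : ∀ t, ((if t = j then σ else ρ0) * (if t = k then σ else ρ0) * ρ0⁻¹).trace =
      if t = j ∧ t = k then (σ * σ * ρ0⁻¹).trace else 1 := by
    intro t
    by_cases htj : t = j <;> by_cases htk : t = k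
    · rw [if_pos htj, if_pos htk, if_pos ⟨htj, htk⟩]
    · rw [if_pos htj, if_neg htk, if_neg fun h => htk h.2, Matrix.mul_assoc, hinv,
        Matrix.mul_one, htr]
    · rw [if_neg htj, if_pos htk, if_neg fun h => htj h.1, Matrix.trace_mul_cycle,
        Matrix.nonsing_inv_mul _ hρ0, Matrix.one_mul, htr]
    · rw [if_neg htj, if_neg htk, if_neg fun h => htj h.1, Matrix.mul_assoc, hinv,
        Matrix.mul_one, htr0]
  rw [inv_tensorFam fun _ => hρ0, tensorFam_mul, tensorFam_mul, trace_tensorFam]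
  simp only [site]
  split_ifs with hjk
  · subst hjk
    simp
  · exact Finset.prod_eq_one fun t _ => if_neg fun h : t = j ∧ t = k => hjk (h.1.symm.trans h.2)

/-- the `χ²`-type identity for the uniform mixture of the PPM states `ρ(j)`. -/
theorem stmt10 {d q : ℕ} (hq : 1 ≤ q) (ρ0 ρbar : Matrix (Fin d) (Fin d) ℂ)
    (hρ0 : IsDensity ρ0) (hρ0pd : ρ0.PosDef) (hρbar : IsDensity ρbar) :
    ((((q : ℂ))⁻¹ • ∑ j : Fin q, tensorFam fun t => if t = j then ρbar else ρ0) *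
      (((q : ℂ))⁻¹ • ∑ j : Fin q, tensorFam fun t => if t = j then ρbar else ρ0) *
      (tensorFam fun _ => ρ0)⁻¹).trace - 1 =
    ((q : ℂ))⁻¹ * ((ρbar * ρbar * ρ0⁻¹).trace - 1) := by
  have hdet : IsUnit ρ0.det := (Matrix.isUnit_iff_isUnit_det ρ0).mp hρ0pd.isUnit
  have hq0 : (q : ℂ) ≠ 0 := Nat.cast_ne_zero.mpr (by omega)
  rw [trace_smul_sum_mul_smul_sum_mul]
  simp only [trace_tensorFam_replace_mul_replace_mul_inv hdet hρ0.2 hρbar.2,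
    sum_sum_ite_eq_else_one, Fintype.card_fin]
  field_simp
  ring
end

section
/- Let ρ be a density matrix on ℂ^d and let χ and χ̂ be arbitrary d²×d² complex matrices. Then ‖ ∑_{j,k=1}^{d²} (χ_{j,k} − χ̂_{j,k}) · Ẽ_j ρ Ẽ_kᴴ ‖₁ ≤ ∑_{j,k=1}^{d²} |χ_{j,k} − χ̂_{j,k}|. -/
open Matrix BigOperators Finset
open scoped ComplexOrder

open Covert

/-!
For the dual matrix `U = M (MᴴM)^{-1/2}` (inverting only on the nonzero spectrum) one has
`Uᴴ M = (MᴴM)^{1/2}`, whose trace is `‖M‖₁`, and `Uᴴ U ≤ 1`, so every entry of `U` has modulus at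
most `1`. Hence `‖M‖₁ = Re tr(Uᴴ M) ≤ ∑ₐ,ᵦ |M a b|`. For the matrix of the theorem,
`Ẽ_j ρ Ẽ_kᴴ = ρ_{j₂k₂} |j₁⟩⟨k₁|`, and the entries of a density matrix have modulus at most `1`.
-/

open scoped MatrixOrder

namespace Matrix

variable {m n : Type*} [Fintype m]

lemma re_conjTranspose_mul_self_apply_self (B : Matrix m n ℂ) (b : n) :
    ((Bᴴ * B) b b).re = ∑ x, ‖B x b‖ ^ 2 := by
  simp only [mul_apply, conjTranspose_apply, Complex.re_sum, Complex.star_def,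
    ← Complex.normSq_eq_norm_sq, Complex.normSq_apply, Complex.mul_re, Complex.conj_re,
    Complex.conj_im]
  ring_nf

lemma two_mul_norm_conjTranspose_mul_self_apply_le (B : Matrix m n ℂ) (a b : n) :
    2 * ‖(Bᴴ * B) a b‖ ≤ ((Bᴴ * B) a a).re + ((Bᴴ * B) b b).re := by
  rw [re_conjTranspose_mul_self_apply_self, re_conjTranspose_mul_self_apply_self,
    ← Finset.sum_add_distrib, mul_apply]
  refine (mul_le_mul_of_nonneg_left (norm_sum_le _ _) zero_le_two).trans ?_
  rw [Finset.mul_sum]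
  refine Finset.sum_le_sum fun x _ => ?_
  rw [norm_mul, conjTranspose_apply, norm_star, ← mul_assoc]
  exact two_mul_le_add_sq _ _

lemma norm_apply_le_one_of_conjTranspose_mul_self_le_one [DecidableEq n] {U : Matrix m n ℂ}
    (hU : Uᴴ * U ≤ 1) (a : m) (b : n) : ‖U a b‖ ≤ 1 := by
  have hdiag : ((Uᴴ * U) b b).re ≤ 1 := by
    simpa using Complex.re_le_re ((le_iff.mp hU).diag_nonneg (i := b))
  rw [re_conjTranspose_mul_self_apply_self] at hdiag
  have hsq : ‖U a b‖ ^ 2 ≤ 1 :=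
    (Finset.single_le_sum (f := fun x => ‖U x b‖ ^ 2) (fun _ _ => by positivity)
      (Finset.mem_univ a)).trans hdiag
  exact (sq_le_one_iff₀ (norm_nonneg _)).mp hsq

variable [Fintype n]

lemma sum_sum_norm_sum_apply_le {ι : Type*} (s : Finset ι) (X : ι → Matrix m n ℂ) :
    ∑ a, ∑ b, ‖(∑ i ∈ s, X i) a b‖ ≤ ∑ i ∈ s, ∑ a, ∑ b, ‖X i a b‖ := by
  calc ∑ a, ∑ b, ‖(∑ i ∈ s, X i) a b‖ ≤ ∑ a, ∑ b, ∑ i ∈ s, ‖X i a b‖ := by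
        gcongr with a _ b _
        rw [sum_apply]
        exact norm_sum_le _ _
    _ = ∑ a, ∑ i ∈ s, ∑ b, ‖X i a b‖ := Finset.sum_congr rfl fun _ _ => Finset.sum_comm
    _ = ∑ i ∈ s, ∑ a, ∑ b, ‖X i a b‖ := Finset.sum_comm

lemma sum_sum_norm_single_apply [DecidableEq m] [DecidableEq n] (i : m) (j : n) (c : ℂ) :
    ∑ a, ∑ b, ‖single i j c a b‖ = ‖c‖ := by
  simp [single_apply, ite_and, apply_ite (‖·‖)]

variable [DecidableEq n]

lemma IsHermitian.trace_cfc {A : Matrix n n ℂ} (hA : A.IsHermitian) (f : ℝ → ℝ) :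
    (cfc f A).trace = ∑ i, (f (hA.eigenvalues i) : ℂ) := by
  rw [hA.cfc_eq, IsHermitian.cfc, Unitary.conjStarAlgAut_apply, trace_mul_cycle,
    Unitary.coe_star_mul_self, one_mul, trace_diagonal]
  rfl

/-- No continuity hypotheses are needed: the spectrum of a matrix is finite. -/
lemma cfc_mul' (A : Matrix n n ℂ) (f g : ℝ → ℝ) :
    cfc (fun x => f x * g x) A = cfc f A * cfc g A :=
  cfc_mul f g A (finite_real_spectrum.continuousOn f) (finite_real_spectrum.continuousOn g)

end Matrix

namespace Covert

variable {n : Type*} [Fintype n] [DecidableEq n]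

lemma traceNorm_eq_trace_cfc_sqrt (M : Matrix n n ℂ) :
    (traceNorm M : ℂ) = (cfc Real.sqrt (Mᴴ * M)).trace := by
  rw [(isHermitian_conjTranspose_mul_self M).trace_cfc, traceNorm]
  push_cast
  rfl

lemma exists_conjTranspose_mul_self_le_one_trace_eq_traceNorm (M : Matrix n n ℂ) :
    ∃ U : Matrix n n ℂ, Uᴴ * U ≤ 1 ∧ (Uᴴ * M).trace = traceNorm M := by
  set A := Mᴴ * M
  have hA : IsSelfAdjoint A := isHermitian_conjTranspose_mul_self M
  set P := cfc (fun x => (√x)⁻¹) A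
  have hP : Pᴴ = P := IsSelfAdjoint.cfc
  refine ⟨M * P, ?_, ?_⟩
  · have hUU : (M * P)ᴴ * (M * P) = cfc (fun x => (√x)⁻¹ * x * (√x)⁻¹) A := by
      rw [cfc_mul', cfc_mul', cfc_id' ℝ A hA, conjTranspose_mul, hP]
      simp only [A, P, Matrix.mul_assoc]
    rw [hUU]
    refine cfc_le_one _ _ fun x _ => ?_
    rcases le_or_gt x 0 with hx | hx
    · simp [Real.sqrt_eq_zero'.mpr hx]
    · refine le_of_eq ?_
      calc (√x)⁻¹ * x * (√x)⁻¹ = x / (√x * √x) := by ring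
        _ = 1 := by rw [Real.mul_self_sqrt hx.le, div_self hx.ne']
  · have hsqrt : Real.sqrt = fun x => (√x)⁻¹ * x := funext fun x => by
      rw [inv_mul_eq_div, Real.div_sqrt]
    rw [traceNorm_eq_trace_cfc_sqrt, hsqrt, cfc_mul', cfc_id' ℝ A hA, conjTranspose_mul, hP,
      Matrix.mul_assoc]

lemma traceNorm_le_sum_sum_norm_apply (M : Matrix n n ℂ) :
    traceNorm M ≤ ∑ a, ∑ b, ‖M a b‖ := by
  obtain ⟨U, hU, htr⟩ := exists_conjTranspose_mul_self_le_one_trace_eq_traceNorm M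
  have hdual : ‖(Uᴴ * M).trace‖ ≤ ∑ b, ∑ a, ‖M a b‖ := by
    rw [trace]
    simp only [Matrix.diag_apply, mul_apply, conjTranspose_apply]
    refine (norm_sum_le _ _).trans <| Finset.sum_le_sum fun b _ =>
      (norm_sum_le _ _).trans <| Finset.sum_le_sum fun a _ => ?_
    rw [norm_mul, norm_star]
    exact mul_le_of_le_one_left (norm_nonneg _)
      (norm_apply_le_one_of_conjTranspose_mul_self_le_one hU a b)
  calc traceNorm M = (Uᴴ * M).trace.re := by rw [htr, Complex.ofReal_re]
    _ ≤ ‖(Uᴴ * M).trace‖ := Complex.re_le_norm _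
    _ ≤ ∑ a, ∑ b, ‖M a b‖ := hdual.trans_eq Finset.sum_comm

lemma IsDensity.norm_apply_le_one {ρ : Matrix n n ℂ} (hρ : IsDensity ρ) (a b : n) :
    ‖ρ a b‖ ≤ 1 := by
  obtain ⟨B, rfl⟩ := CStarAlgebra.nonneg_iff_eq_star_mul_self.mp hρ.1.nonneg
  rw [star_eq_conjTranspose] at hρ ⊢
  have hdiag : ∀ i, ((Bᴴ * B) i i).re ≤ 1 := fun i => by
    calc ((Bᴴ * B) i i).re ≤ ∑ x, ((Bᴴ * B) x x).re :=
          Finset.single_le_sum (f := fun x => ((Bᴴ * B) x x).re) (fun x _ => by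
            rw [re_conjTranspose_mul_self_apply_self]; positivity) (Finset.mem_univ i)
      _ = 1 := by simpa [trace, Complex.re_sum] using congrArg Complex.re hρ.2
  linarith [two_mul_norm_conjTranspose_mul_self_apply_le B a b, hdiag a, hdiag b]

end Covert

lemma Etilde_mul_mul_conjTranspose {d : ℕ} (ρ : Matrix (Fin d) (Fin d) ℂ)
    (j k : Fin d × Fin d) :
    Etilde j * ρ * (Etilde k)ᴴ = single j.1 k.1 (ρ j.2 k.2) := by
  simp [Etilde]

/-- the trace norm of `∑_{j,k} (χ_{jk} − χ̂_{jk}) Ẽ_j ρ Ẽ_kᴴ` is at most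
the entrywise `ℓ¹` distance between `χ` and `χ̂`. -/
theorem stmt12 {d : ℕ} (ρ : Matrix (Fin d) (Fin d) ℂ) (hρ : IsDensity ρ)
    (χ χhat : Matrix (Fin d × Fin d) (Fin d × Fin d) ℂ) :
    traceNorm (∑ j, ∑ k, (χ j k - χhat j k) • (Etilde j * ρ * (Etilde k)ᴴ)) ≤
      ∑ j, ∑ k, ‖χ j k - χhat j k‖ := by
  calc _ ≤ ∑ j, ∑ k, ∑ a, ∑ b,
          ‖((χ j k - χhat j k) • (Etilde j * ρ * (Etilde k)ᴴ)) a b‖ :=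
        (traceNorm_le_sum_sum_norm_apply _).trans <| (sum_sum_norm_sum_apply_le _ _).trans <|
          Finset.sum_le_sum fun j _ => sum_sum_norm_sum_apply_le _ _
    _ = ∑ j, ∑ k, ‖χ j k - χhat j k‖ * ‖ρ j.2 k.2‖ := by
        simp only [Etilde_mul_mul_conjTranspose, smul_single, sum_sum_norm_single_apply,
          smul_eq_mul, norm_mul]
    _ ≤ ∑ j, ∑ k, ‖χ j k - χhat j k‖ := by
        gcongr with j _ k _
        exact mul_le_of_le_one_right (norm_nonneg _) (hρ.norm_apply_le_one _ _)
end

section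
/- Let σ and σ' be n×n Hermitian positive semidefinite complex matrices with σ positive definite and ‖σ − σ'‖₁ < λ_min(σ). Then σ' is positive definite and ‖log σ' − log σ‖₂ ≤ n² · ‖σ − σ'‖₁ / ( λ_min(σ) − ‖σ − σ'‖₁ ). -/
open Matrix BigOperators Finset
open scoped ComplexOrder

/-! Diagonalize `σ = U diag(λ) Uᴴ` and `σ' = V diag(μ) Vᴴ` and put `W = Uᴴ V`. Then
`Uᴴ (f σ' - f σ) V` has entries `W i j * (f (μ j) - f (λ i))`, so a function that is `L`-Lipschitz
on the two spectra is `L`-Lipschitz for the Frobenius norm. Comparing Rayleigh quotients at the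
eigenvectors of `σ'` gives `μ j ≥ λ_min(σ) - ‖σ - σ'‖₂ ≥ λ_min(σ) - ‖σ - σ'‖₁ =: c > 0`, so `σ'` is
positive definite and `log` is `c⁻¹`-Lipschitz on both spectra. Hence
`‖log σ' - log σ‖₂ ≤ ‖σ - σ'‖₁ / c`, which is the claim even without the factor `n²`. -/

namespace Covert

section

variable {n : Type*} [Fintype n]

lemma re_trace_conjTranspose_mul_self (X : Matrix n n ℂ) :
    (Xᴴ * X).trace.re = ∑ i, ∑ j, Complex.normSq (X i j) := by
  simp only [trace, Matrix.diag, mul_apply, conjTranspose_apply, Complex.re_sum, Complex.star_def,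
    Complex.normSq_apply, Complex.mul_re, Complex.conj_re, Complex.conj_im]
  rw [Finset.sum_comm]
  simp only [neg_mul, sub_neg_eq_add]

variable [DecidableEq n]

lemma re_dotProduct_conj_diagonal_mulVec (U : Matrix n n ℂ) (d : n → ℝ) (x : n → ℂ) :
    (star x ⬝ᵥ (U * diagonal (RCLike.ofReal ∘ d) * star U) *ᵥ x).re =
      ∑ i, d i * Complex.normSq ((star U *ᵥ x) i) := by
  have hstar : star x ᵥ* U = star (star U *ᵥ x) := by
    rw [star_mulVec, star_eq_conjTranspose, conjTranspose_conjTranspose]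
  rw [← mulVec_mulVec, ← mulVec_mulVec, dotProduct_mulVec, hstar]
  simp only [dotProduct, mulVec_diagonal, Complex.re_sum]
  refine Finset.sum_congr rfl fun i _ => ?_
  rw [Pi.star_apply, Function.comp_apply, mul_left_comm, RCLike.star_def,
    ← Complex.normSq_eq_conj_mul_self]
  exact Complex.re_ofReal_mul _ _

lemma sum_normSq_star_mulVec {U : Matrix n n ℂ} (hU : U ∈ unitaryGroup n ℂ) (x : n → ℂ) :
    ∑ i, Complex.normSq ((star U *ᵥ x) i) = ∑ i, Complex.normSq (x i) := by
  simpa [Unitary.mul_star_self_of_mem hU, Complex.normSq_apply, dotProduct, Complex.re_sum] using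
    (re_dotProduct_conj_diagonal_mulVec U 1 x).symm

lemma frobeniusNorm_nonneg (X : Matrix n n ℂ) : 0 ≤ frobeniusNorm X :=
  Real.sqrt_nonneg _

lemma frobeniusNorm_sq (X : Matrix n n ℂ) :
    frobeniusNorm X ^ 2 = ∑ i, ∑ j, Complex.normSq (X i j) := by
  rw [frobeniusNorm, re_trace_conjTranspose_mul_self, Real.sq_sqrt]
  exact Finset.sum_nonneg fun i _ => Finset.sum_nonneg fun j _ => Complex.normSq_nonneg _

lemma frobeniusNorm_conjTranspose (X : Matrix n n ℂ) : frobeniusNorm Xᴴ = frobeniusNorm X := by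
  rw [frobeniusNorm, frobeniusNorm, conjTranspose_conjTranspose, trace_mul_comm]

lemma frobeniusNorm_neg (X : Matrix n n ℂ) : frobeniusNorm (-X) = frobeniusNorm X := by
  rw [frobeniusNorm, frobeniusNorm, conjTranspose_neg, neg_mul_neg]

lemma frobeniusNorm_sub_comm (X Y : Matrix n n ℂ) :
    frobeniusNorm (X - Y) = frobeniusNorm (Y - X) := by
  rw [← neg_sub, frobeniusNorm_neg]

lemma frobeniusNorm_unitary_mul {U : Matrix n n ℂ} (hU : U ∈ unitaryGroup n ℂ)
    (X : Matrix n n ℂ) : frobeniusNorm (U * X) = frobeniusNorm X := by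
  rw [frobeniusNorm, frobeniusNorm, conjTranspose_mul, Matrix.mul_assoc, ← Matrix.mul_assoc Uᴴ,
    ← star_eq_conjTranspose U, Unitary.star_mul_self_of_mem hU, Matrix.one_mul]

lemma frobeniusNorm_mul_unitary {U : Matrix n n ℂ} (hU : U ∈ unitaryGroup n ℂ)
    (X : Matrix n n ℂ) : frobeniusNorm (X * U) = frobeniusNorm X := by
  rw [← frobeniusNorm_conjTranspose, conjTranspose_mul, ← star_eq_conjTranspose U,
    frobeniusNorm_unitary_mul (Unitary.star_mem hU), frobeniusNorm_conjTranspose]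

lemma frobeniusNorm_le_traceNorm (X : Matrix n n ℂ) : frobeniusNorm X ≤ traceNorm X := by
  have hXX := isHermitian_conjTranspose_mul_self X
  have hsqrt : ∀ i ∈ Finset.univ, 0 ≤ √(hXX.eigenvalues i) := fun _ _ => Real.sqrt_nonneg _
  rw [frobeniusNorm, traceNorm, Real.sqrt_le_left (Finset.sum_nonneg hsqrt)]
  calc (Xᴴ * X).trace.re = ∑ i, √(hXX.eigenvalues i) ^ 2 := by
        simp [hXX.trace_eq_sum_eigenvalues, Complex.re_sum,
          Real.sq_sqrt (eigenvalues_conjTranspose_mul_self_nonneg X _)]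
    _ ≤ (∑ i, √(hXX.eigenvalues i)) ^ 2 := Finset.sum_sq_le_sq_sum_of_nonneg hsqrt

lemma traceNorm_nonneg (X : Matrix n n ℂ) : 0 ≤ traceNorm X :=
  Finset.sum_nonneg fun _ _ => Real.sqrt_nonneg _

lemma isHermitian_eq_conj_diagonal {A : Matrix n n ℂ} (hA : A.IsHermitian) :
    A = (hA.eigenvectorUnitary : Matrix n n ℂ) * diagonal (RCLike.ofReal ∘ hA.eigenvalues) *
      star (hA.eigenvectorUnitary : Matrix n n ℂ) := by
  simpa only [Unitary.conjStarAlgAut_apply] using hA.spectral_theorem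

lemma eigMin_le {A : Matrix n n ℂ} (hA : A.IsHermitian) (i : n) : eigMin hA ≤ hA.eigenvalues i :=
  ciInf_le (Finite.bddBelow_range _) i

lemma le_re_dotProduct_mulVec {A : Matrix n n ℂ} (hA : A.IsHermitian) {c : ℝ}
    (hc : ∀ i, c ≤ hA.eigenvalues i) (x : n → ℂ) :
    c * ∑ i, Complex.normSq (x i) ≤ (star x ⬝ᵥ A *ᵥ x).re := by
  rw [← sum_normSq_star_mulVec hA.eigenvectorUnitary.2 x, Finset.mul_sum]
  conv_rhs => rw [isHermitian_eq_conj_diagonal hA]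
  rw [re_dotProduct_conj_diagonal_mulVec]
  exact Finset.sum_le_sum fun i _ => mul_le_mul_of_nonneg_right (hc i) (Complex.normSq_nonneg _)

lemma abs_eigenvalues_le_frobeniusNorm {A : Matrix n n ℂ} (hA : A.IsHermitian) (i : n) :
    |hA.eigenvalues i| ≤ frobeniusNorm A := by
  have hdiag : frobeniusNorm A = frobeniusNorm (diagonal (RCLike.ofReal ∘ hA.eigenvalues)) := by
    conv_lhs => rw [isHermitian_eq_conj_diagonal hA]
    rw [frobeniusNorm_mul_unitary (Unitary.star_mem hA.eigenvectorUnitary.2),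
      frobeniusNorm_unitary_mul hA.eigenvectorUnitary.2]
  rw [hdiag, ← Real.sqrt_sq (frobeniusNorm_nonneg _), frobeniusNorm_sq, ← Real.sqrt_sq_eq_abs]
  apply Real.sqrt_le_sqrt
  simp only [diagonal_apply, apply_ite Complex.normSq, map_zero, Finset.sum_ite_eq, Finset.mem_univ,
    if_true, Function.comp_apply]
  refine le_trans ?_ (Finset.single_le_sum (fun x _ => Complex.normSq_nonneg _) (Finset.mem_univ i))
  simp [sq]

lemma eigMin_sub_frobeniusNorm_le_eigenvalues {A B : Matrix n n ℂ} (hA : A.IsHermitian)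
    (hB : B.IsHermitian) (j : n) : eigMin hA - frobeniusNorm (A - B) ≤ hB.eigenvalues j := by
  set v : n → ℂ := ⇑(hB.eigenvectorBasis j)
  have hv : ∑ i, Complex.normSq (v i) = 1 := by
    have hnorm := EuclideanSpace.norm_sq_eq (hB.eigenvectorBasis j)
    rw [hB.eigenvectorBasis.orthonormal.1 j, one_pow] at hnorm
    simpa [Complex.normSq_eq_norm_sq] using hnorm.symm
  have hqA := le_re_dotProduct_mulVec hA (eigMin_le hA) v
  have hqΔ := le_re_dotProduct_mulVec (hB.sub hA) (c := -frobeniusNorm (A - B)) (fun i => by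
    rw [frobeniusNorm_sub_comm]
    exact neg_le_of_abs_le (abs_eigenvalues_le_frobeniusNorm (hB.sub hA) i)) v
  rw [hv, mul_one] at hqA hqΔ
  have hsplit : (star v ⬝ᵥ B *ᵥ v).re = (star v ⬝ᵥ A *ᵥ v).re + (star v ⬝ᵥ (B - A) *ᵥ v).re := by
    simp [sub_mulVec, dotProduct_sub]
  rw [hB.eigenvalues_eq j]
  change _ ≤ (star v ⬝ᵥ B *ᵥ v).re
  linarith

lemma frobeniusNorm_conj_diagonal_sub_sq {U V : Matrix n n ℂ} (hU : U ∈ unitaryGroup n ℂ)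
    (hV : V ∈ unitaryGroup n ℂ) (a b : n → ℝ) :
    frobeniusNorm (V * diagonal (RCLike.ofReal ∘ b) * star V -
        U * diagonal (RCLike.ofReal ∘ a) * star U) ^ 2 =
      ∑ i, ∑ j, Complex.normSq ((star U * V) i j) * (b j - a i) ^ 2 := by
  have hconj : star U * (V * diagonal (RCLike.ofReal ∘ b) * star V -
        U * diagonal (RCLike.ofReal ∘ a) * star U) * V =
      star U * V * diagonal (RCLike.ofReal ∘ b) - diagonal (RCLike.ofReal ∘ a) * (star U * V) := by
    rw [mul_sub, sub_mul]
    congr 1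
    · rw [show star U * (V * diagonal (RCLike.ofReal ∘ b) * star V) * V =
          star U * V * diagonal (RCLike.ofReal ∘ b) * (star V * V) by simp only [Matrix.mul_assoc],
        Unitary.star_mul_self_of_mem hV, Matrix.mul_one]
    · rw [show star U * (U * diagonal (RCLike.ofReal ∘ a) * star U) * V =
          star U * U * diagonal (RCLike.ofReal ∘ a) * (star U * V) by simp only [Matrix.mul_assoc],
        Unitary.star_mul_self_of_mem hU, Matrix.one_mul]
  rw [← frobeniusNorm_unitary_mul (Unitary.star_mem hU), ← frobeniusNorm_mul_unitary hV, hconj,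
    frobeniusNorm_sq]
  refine Finset.sum_congr rfl fun i _ => Finset.sum_congr rfl fun j _ => ?_
  rw [Matrix.sub_apply, mul_diagonal, diagonal_mul]
  change Complex.normSq ((star U * V) i j * (b j : ℂ) - (a i : ℂ) * (star U * V) i j) = _
  rw [show (star U * V) i j * (b j : ℂ) - (a i : ℂ) * (star U * V) i j =
      (star U * V) i j * ((b j - a i : ℝ) : ℂ) by push_cast; ring,
    Complex.normSq_mul, Complex.normSq_ofReal, sq]

lemma frobeniusNorm_conj_diagonal_comp_sub_le {U V : Matrix n n ℂ} (hU : U ∈ unitaryGroup n ℂ)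
    (hV : V ∈ unitaryGroup n ℂ) (a b : n → ℝ) {f : ℝ → ℝ} {L : ℝ} (hL : 0 ≤ L)
    (hf : ∀ i j, |f (b j) - f (a i)| ≤ L * |b j - a i|) :
    frobeniusNorm (V * diagonal (RCLike.ofReal ∘ f ∘ b) * star V -
        U * diagonal (RCLike.ofReal ∘ f ∘ a) * star U) ≤
      L * frobeniusNorm (V * diagonal (RCLike.ofReal ∘ b) * star V -
        U * diagonal (RCLike.ofReal ∘ a) * star U) := by
  refine (pow_le_pow_iff_left₀ (frobeniusNorm_nonneg _)
    (mul_nonneg hL (frobeniusNorm_nonneg _)) two_ne_zero).1 ?_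
  rw [mul_pow, frobeniusNorm_conj_diagonal_sub_sq hU hV, frobeniusNorm_conj_diagonal_sub_sq hU hV,
    Finset.mul_sum]
  refine Finset.sum_le_sum fun i _ => ?_
  rw [Finset.mul_sum]
  refine Finset.sum_le_sum fun j _ => ?_
  have hsq : (f (b j) - f (a i)) ^ 2 ≤ L ^ 2 * (b j - a i) ^ 2 := by
    rw [← sq_abs, ← sq_abs (b j - a i), ← mul_pow]
    exact pow_le_pow_left₀ (abs_nonneg _) (hf i j) 2
  calc Complex.normSq ((star U * V) i j) * ((f ∘ b) j - (f ∘ a) i) ^ 2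
      ≤ Complex.normSq ((star U * V) i j) * (L ^ 2 * (b j - a i) ^ 2) :=
        mul_le_mul_of_nonneg_left hsq (Complex.normSq_nonneg _)
    _ = L ^ 2 * (Complex.normSq ((star U * V) i j) * (b j - a i) ^ 2) := by ring

lemma matFun_eq_conj_diagonal {A : Matrix n n ℂ} (hA : A.IsHermitian) (f : ℝ → ℝ) :
    matFun f A = (hA.eigenvectorUnitary : Matrix n n ℂ) *
      diagonal (RCLike.ofReal ∘ f ∘ hA.eigenvalues) *
        star (hA.eigenvectorUnitary : Matrix n n ℂ) := by
  rw [matFun, dif_pos hA, IsHermitian.cfc, Unitary.conjStarAlgAut_apply]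

lemma frobeniusNorm_matFun_sub_le {A B : Matrix n n ℂ} (hA : A.IsHermitian) (hB : B.IsHermitian)
    {f : ℝ → ℝ} {L : ℝ} (hL : 0 ≤ L)
    (hf : ∀ i j, |f (hB.eigenvalues j) - f (hA.eigenvalues i)| ≤
      L * |hB.eigenvalues j - hA.eigenvalues i|) :
    frobeniusNorm (matFun f B - matFun f A) ≤ L * frobeniusNorm (B - A) := by
  rw [matFun_eq_conj_diagonal hA, matFun_eq_conj_diagonal hB]
  conv_rhs => rw [isHermitian_eq_conj_diagonal hA, isHermitian_eq_conj_diagonal hB]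
  exact frobeniusNorm_conj_diagonal_comp_sub_le hA.eigenvectorUnitary.2 hB.eigenvectorUnitary.2
    _ _ hL hf

end

lemma abs_log_sub_log_le {a b c : ℝ} (hc : 0 < c) (ha : c ≤ a) (hb : c ≤ b) :
    |Real.log a - Real.log b| ≤ c⁻¹ * |a - b| := by
  wlog hba : b ≤ a generalizing a b
  · rw [abs_sub_comm, abs_sub_comm a b]
    exact this hb ha (le_of_not_ge hba)
  have hb0 : 0 < b := hc.trans_le hb
  rw [abs_of_nonneg (sub_nonneg.mpr (Real.log_le_log hb0 hba)), abs_of_nonneg (sub_nonneg.mpr hba),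
    ← Real.log_div (hb0.trans_le hba).ne' hb0.ne', inv_mul_eq_div]
  calc Real.log (a / b) ≤ a / b - 1 := Real.log_le_sub_one_of_pos (div_pos (hc.trans_le ha) hb0)
    _ = (a - b) / b := by field_simp
    _ ≤ (a - b) / c := by gcongr

end Covert

open Covert

/-- perturbation bound for the matrix logarithm in Frobenius norm. -/
theorem stmt14 {n : ℕ} (σ σ' : Matrix (Fin n) (Fin n) ℂ)
    (hσ : σ.PosDef) (hσ' : σ'.PosSemidef)
    (hclose : traceNorm (σ - σ') < eigMin hσ.1) :
    σ'.PosDef ∧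
    frobeniusNorm (matLog σ' - matLog σ) ≤
      (n : ℝ) ^ 2 * traceNorm (σ - σ') / (eigMin hσ.1 - traceNorm (σ - σ')) := by
  set c := eigMin hσ.1 - traceNorm (σ - σ')
  have hc : 0 < c := sub_pos.mpr hclose
  -- for `n = 0` both sides of `hclose` are the junk value `0`
  have hn : 1 ≤ n := Nat.one_le_iff_ne_zero.2 (by rintro rfl; simp [traceNorm, eigMin] at hclose)
  have hlam : ∀ i, c ≤ hσ.1.eigenvalues i := fun i => by
    linarith [eigMin_le hσ.1 i, traceNorm_nonneg (σ - σ')]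
  have hmu : ∀ j, c ≤ hσ'.1.eigenvalues j := fun j => by
    linarith [eigMin_sub_frobeniusNorm_le_eigenvalues hσ.1 hσ'.1 j,
      frobeniusNorm_le_traceNorm (σ - σ')]
  refine ⟨hσ'.1.posDef_iff_eigenvalues_pos.2 fun j => hc.trans_le (hmu j), ?_⟩
  calc frobeniusNorm (matLog σ' - matLog σ) ≤ c⁻¹ * frobeniusNorm (σ' - σ) :=
        frobeniusNorm_matFun_sub_le hσ.1 hσ'.1 (inv_nonneg.2 hc.le) fun i j =>
          abs_log_sub_log_le hc (hmu j) (hlam i)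
    _ ≤ c⁻¹ * traceNorm (σ - σ') := by
        rw [frobeniusNorm_sub_comm]
        gcongr
        exact frobeniusNorm_le_traceNorm _
    _ ≤ (n : ℝ) ^ 2 * traceNorm (σ - σ') / c := by
        rw [inv_mul_eq_div]
        gcongr
        exact le_mul_of_one_le_left (traceNorm_nonneg _) (one_le_pow₀ (by exact_mod_cast hn))
end

section
/- Let X be a finite set, P a probability mass function on X, and (ρ_x)_{x∈X}, (σ_x)_{x∈X} two families of density matrices on ℂ^d such that ‖ρ_x − σ_x‖₁ ≤ δ for every x ∈ X, where 0 < δ ≤ e⁻¹. Then I(P, σ) ≥ I(P, ρ) − 2δ·log(d/δ). -/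
/-!
Write `η(t) = -t log t`. If `‖ρ - σ‖₁ ≤ δ ≤ e⁻¹`, then `|H(ρ) - H(σ)| ≤ δ log(d/δ)` (Fannes).
In the eigenbasis of `ρ`, the diagonal `q` of `σ` is a doubly stochastic image of the
spectrum of `σ` (Schur), so `H(σ) ≤ ∑ η(qᵢ)` by concavity, and `∑ |pᵢ - qᵢ| ≤ ‖ρ - σ‖₁` for
the spectrum `p` of `ρ`. The scalar estimate `η(q) - η(p) ≤ η(|p - q|)` and the tangent line
of `η` at `δ/d` then bound `H(σ) - H(ρ)`.

The Holevo quantity changes by at most two such terms: one for the averaged states, which are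
still `δ`-close because the trace norm is convex, and the average of the terms for the
individual states.
-/

open Matrix BigOperators Finset
open scoped ComplexOrder

open Covert

/-- Holevo information of an ensemble `{P(x), ρ_x}`. -/
noncomputable def holevoInfo {d : ℕ} {X : Type*} [Fintype X] (P : X → ℝ)
    (ρ : X → Matrix (Fin d) (Fin d) ℂ) : ℝ :=
  vnEntropy (∑ x, (P x : ℂ) • ρ x) - ∑ x, P x * vnEntropy (ρ x)

namespace Real

lemma negMulLog_le_sub_sub_mul_log {t y : ℝ} (ht : 0 < t) (hy : 0 ≤ y) :
    negMulLog y ≤ t - y - y * log t := by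
  rcases hy.eq_or_lt with rfl | hy
  · simpa using ht.le
  have h := mul_le_mul_of_nonneg_left (log_le_sub_one_of_pos (div_pos ht hy)) hy.le
  rw [log_div ht.ne' hy.ne', mul_sub_one, mul_div_cancel₀ _ hy.ne'] at h
  rw [negMulLog, neg_mul]
  linarith

lemma negMulLog_add_le {x y : ℝ} (hx : 0 ≤ x) (hy : 0 ≤ y) :
    negMulLog (x + y) ≤ negMulLog x + negMulLog y := by
  have key {a : ℝ} (ha : 0 ≤ a) (hab : a ≤ x + y) : a * log a ≤ a * log (x + y) := by
    rcases ha.eq_or_lt with rfl | ha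
    · simp
    · exact mul_le_mul_of_nonneg_left (log_le_log ha hab) ha.le
  simp only [negMulLog, neg_mul, add_mul]
  linarith [key hx (by linarith), key hy (by linarith)]

lemma self_le_negMulLog {x : ℝ} (hx : 0 ≤ x) (hx1 : x ≤ exp (-1)) : x ≤ negMulLog x := by
  rcases hx.eq_or_lt with rfl | hx
  · simp
  have : log x ≤ -1 := by simpa using log_le_log hx hx1
  rw [negMulLog, neg_mul, ← mul_neg]
  nlinarith

lemma negMulLog_sub_negMulLog_le {x y : ℝ} (hx : 0 ≤ x) (hx1 : x ≤ 1) (hy : 0 ≤ y)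
    (hxy : |x - y| ≤ exp (-1)) : negMulLog y - negMulLog x ≤ negMulLog |x - y| := by
  rcases le_or_gt x y with h | h
  · rw [abs_sub_comm, abs_of_nonneg (sub_nonneg.2 h)]
    have := negMulLog_add_le hx (sub_nonneg.2 h)
    rw [add_sub_cancel] at this
    linarith
  · rw [abs_of_pos (sub_pos.2 h)] at hxy ⊢
    have h1 := negMulLog_le_sub_sub_mul_log (hy.trans_lt h) hy
    have h2 : x * log x ≤ y * log x := mul_le_mul_of_nonpos_right h.le (log_nonpos hx hx1)
    have h3 := self_le_negMulLog (sub_nonneg.2 h.le) hxy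
    have h4 : negMulLog x = -(x * log x) := by rw [negMulLog, neg_mul]
    linarith

lemma sum_negMulLog_le_mul_log_card_div {n : Type*} [Fintype n] [Nonempty n] {ε : n → ℝ}
    {δ : ℝ} (hε : ∀ i, 0 ≤ ε i) (hsum : ∑ i, ε i ≤ δ) (hδ0 : 0 < δ) (hδ1 : δ ≤ exp (-1)) :
    ∑ i, negMulLog (ε i) ≤ δ * log (Fintype.card n / δ) := by
  set d : ℝ := (Fintype.card n : ℝ)
  have hd : 1 ≤ d := Nat.one_le_cast.2 Fintype.card_pos
  have hL : 1 ≤ log (d / δ) := by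
    rw [le_log_iff_exp_le (by positivity), le_div_iff₀ hδ0]
    calc exp 1 * δ ≤ exp 1 * exp (-1) := by gcongr
      _ = 1 := by rw [← exp_add, add_neg_cancel, exp_zero]
      _ ≤ d := hd
  -- the tangent line of `negMulLog` at `δ / d`
  have tangent (i : n) : negMulLog (ε i) ≤ δ / d + ε i * (log (d / δ) - 1) := by
    have := negMulLog_le_sub_sub_mul_log (t := δ / d) (by positivity) (hε i)
    have hlog : log (δ / d) = -log (d / δ) := by rw [← log_inv, inv_div]
    rw [hlog] at this
    linarith
  calc ∑ i, negMulLog (ε i) ≤ ∑ i, (δ / d + ε i * (log (d / δ) - 1)) :=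
        Finset.sum_le_sum fun i _ => tangent i
    _ = δ + (∑ i, ε i) * (log (d / δ) - 1) := by
        rw [Finset.sum_add_distrib, ← Finset.sum_mul, Finset.sum_const, Finset.card_univ,
          nsmul_eq_mul, mul_div_cancel₀ _ (by positivity)]
    _ ≤ δ + δ * (log (d / δ) - 1) := by gcongr
    _ = δ * log (d / δ) := by ring

lemma sum_negMulLog_sub_sum_negMulLog_le {n : Type*} [Fintype n] [Nonempty n] {p q : n → ℝ}
    {δ : ℝ} (hp0 : ∀ i, 0 ≤ p i) (hp1 : ∀ i, p i ≤ 1) (hq0 : ∀ i, 0 ≤ q i)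
    (hpq : ∑ i, |p i - q i| ≤ δ) (hδ0 : 0 < δ) (hδ1 : δ ≤ exp (-1)) :
    ∑ i, negMulLog (q i) - ∑ i, negMulLog (p i) ≤ δ * log (Fintype.card n / δ) := by
  have hle (i : n) : |p i - q i| ≤ exp (-1) :=
    ((Finset.single_le_sum (fun j _ => abs_nonneg (p j - q j)) (Finset.mem_univ i)).trans
      hpq).trans hδ1
  rw [← Finset.sum_sub_distrib]
  exact (Finset.sum_le_sum fun i _ =>
    negMulLog_sub_negMulLog_le (hp0 i) (hp1 i) (hq0 i) (hle i)).trans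
    (sum_negMulLog_le_mul_log_card_div (fun i => abs_nonneg _) hpq hδ0 hδ1)

end Real

section DoublyStochastic

variable {n : Type*} [Fintype n] [DecidableEq n] {M : Matrix n n ℝ}

lemma ConvexOn.sum_map_mulVec_le {s : Set ℝ} {f : ℝ → ℝ} (hf : ConvexOn ℝ s f)
    (hM : M ∈ doublyStochastic ℝ n) {x : n → ℝ} (hx : ∀ i, x i ∈ s) :
    ∑ i, f ((M *ᵥ x) i) ≤ ∑ i, f (x i) :=
  calc ∑ i, f ((M *ᵥ x) i) ≤ ∑ i, ∑ j, M i j * f (x j) := by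
        refine Finset.sum_le_sum fun i _ => ?_
        simpa only [mulVec, dotProduct, smul_eq_mul] using
          hf.map_sum_le (fun j _ => nonneg_of_mem_doublyStochastic hM)
            (sum_row_of_mem_doublyStochastic hM i) (fun j _ => hx j)
    _ = ∑ j, f (x j) := by
        rw [Finset.sum_comm]
        simp only [← Finset.sum_mul, sum_col_of_mem_doublyStochastic hM, one_mul]

lemma ConcaveOn.sum_map_le_sum_map_mulVec {s : Set ℝ} {f : ℝ → ℝ} (hf : ConcaveOn ℝ s f)
    (hM : M ∈ doublyStochastic ℝ n) {x : n → ℝ} (hx : ∀ i, x i ∈ s) :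
    ∑ i, f (x i) ≤ ∑ i, f ((M *ᵥ x) i) := by
  simpa using hf.neg.sum_map_mulVec_le hM hx

lemma sum_abs_mulVec_le_of_mem_doublyStochastic (hM : M ∈ doublyStochastic ℝ n) (x : n → ℝ) :
    ∑ i, |(M *ᵥ x) i| ≤ ∑ i, |x i| :=
  (convexOn_norm convex_univ).sum_map_mulVec_le hM (fun _ => Set.mem_univ _)

end DoublyStochastic

namespace Matrix

variable {n : Type*} [Fintype n] [DecidableEq n]

lemma normSq_mem_doublyStochastic {U : Matrix n n ℂ} (hU : U ∈ unitaryGroup n ℂ) :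
    of (fun i j => Complex.normSq (U i j)) ∈ doublyStochastic ℝ n := by
  refine mem_doublyStochastic_iff_sum.2
    ⟨fun i j => Complex.normSq_nonneg _, fun i => ?_, fun j => ?_⟩
  · have h := congr_fun₂ (mem_unitaryGroup_iff.1 hU) i i
    simp only [mul_apply, star_apply, RCLike.star_def, Complex.mul_conj, one_apply_eq] at h
    exact_mod_cast h
  · have h := congr_fun₂ (mem_unitaryGroup_iff'.1 hU) j j
    simp only [mul_apply, star_apply, RCLike.star_def, mul_comm _ (U _ j), Complex.mul_conj,
      one_apply_eq] at h
    exact_mod_cast h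

lemma IsHermitian.exists_mem_doublyStochastic_re_diag_eq {A : Matrix n n ℂ} (hA : A.IsHermitian)
    {N : Matrix n n ℂ} (hN : N ∈ unitaryGroup n ℂ) :
    ∃ M ∈ doublyStochastic ℝ n, (fun i => ((star N * A * N) i i).re) = M *ᵥ hA.eigenvalues := by
  set V := star N * (hA.eigenvectorUnitary : Matrix n n ℂ)
  have hV : V ∈ unitaryGroup n ℂ := mul_mem (Unitary.star_mem hN) hA.eigenvectorUnitary.2
  have hNAN : star N * A * N = V * diagonal (RCLike.ofReal ∘ hA.eigenvalues) * star V := by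
    conv_lhs => rw [hA.spectral_theorem, Unitary.conjStarAlgAut_apply]
    simp only [V, star_mul, star_star, Matrix.mul_assoc]
  refine ⟨_, normSq_mem_doublyStochastic hV, funext fun i => ?_⟩
  rw [hNAN, mul_apply, mulVec, dotProduct, Complex.re_sum]
  refine Finset.sum_congr rfl fun j _ => ?_
  rw [mul_diagonal, star_apply, RCLike.star_def, mul_right_comm, Complex.mul_conj]
  simp

lemma IsHermitian.re_star_eigenvectorUnitary_mul_mul_apply_self {A : Matrix n n ℂ}
    (hA : A.IsHermitian) (i : n) :
    ((star (hA.eigenvectorUnitary : Matrix n n ℂ) * A * hA.eigenvectorUnitary) i i).re =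
      hA.eigenvalues i := by
  rw [← Unitary.conjStarAlgAut_star_apply (S := ℂ), hA.conjStarAlgAut_star_eigenvectorUnitary]
  simp

open Polynomial in
lemma IsHermitian.traceNorm_eq_sum_abs_eigenvalues {A : Matrix n n ℂ} (hA : A.IsHermitian) :
    traceNorm A = ∑ i, |hA.eigenvalues i| := by
  have hB := isHermitian_conjTranspose_mul_self A
  have hroots : (Aᴴ * A).charpoly.roots =
      univ.val.map (fun i => ((hA.eigenvalues i ^ 2 : ℝ) : ℂ)) := by
    have hA' : IsSelfAdjoint A := hA
    rw [hA.eq, ← sq, ← cfc_pow_id (R := ℝ) A 2 hA', hA.charpoly_cfc_eq, Polynomial.roots_prod]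
    · simp only [roots_X_sub_C, Multiset.bind_singleton]; rfl
    · exact Finset.prod_ne_zero_iff.2 fun i _ => X_sub_C_ne_zero _
  rw [hB.roots_charpoly_eq_eigenvalues] at hroots
  have := congr_arg (fun s => (s.map (fun z : ℂ => √z.re)).sum) hroots
  rw [traceNorm]
  simpa [Multiset.map_map, Function.comp_def, ← Complex.ofReal_pow, Real.sqrt_sq_eq_abs] using this

lemma IsHermitian.sum_abs_re_diag_le_traceNorm {A : Matrix n n ℂ} (hA : A.IsHermitian)
    {N : Matrix n n ℂ} (hN : N ∈ unitaryGroup n ℂ) :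
    ∑ i, |((star N * A * N) i i).re| ≤ traceNorm A := by
  obtain ⟨M, hM, hdiag⟩ := hA.exists_mem_doublyStochastic_re_diag_eq hN
  rw [hA.traceNorm_eq_sum_abs_eigenvalues]
  calc ∑ i, |((star N * A * N) i i).re| = ∑ i, |(M *ᵥ hA.eigenvalues) i| := by
        simp only [← hdiag]
    _ ≤ ∑ i, |hA.eigenvalues i| := sum_abs_mulVec_le_of_mem_doublyStochastic hM _

lemma IsHermitian.vnEntropy_eq_sum_negMulLog {A : Matrix n n ℂ} (hA : A.IsHermitian) :
    vnEntropy A = ∑ i, Real.negMulLog (hA.eigenvalues i) := by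
  have hmul : A * matLog A = Unitary.conjStarAlgAut ℂ _ hA.eigenvectorUnitary
      (diagonal fun i => ((hA.eigenvalues i * Real.log (hA.eigenvalues i) : ℝ) : ℂ)) := by
    rw [matLog, matFun, dif_pos hA, IsHermitian.cfc]
    conv_lhs => arg 1; rw [hA.spectral_theorem]
    rw [← map_mul, diagonal_mul_diagonal]
    simp
  rw [vnEntropy, hmul, Unitary.conjStarAlgAut_apply, trace_mul_cycle, Unitary.coe_star_mul_self,
    Matrix.one_mul, trace_diagonal, Complex.re_sum, ← Finset.sum_neg_distrib]
  simp [Real.negMulLog]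

end Matrix

namespace Covert

variable {n : Type*} [Fintype n] [DecidableEq n]

lemma traceNorm_neg (A : Matrix n n ℂ) : traceNorm (-A) = traceNorm A := by
  simp only [traceNorm, conjTranspose_neg, neg_mul_neg]

lemma traceNorm_sub_comm (A B : Matrix n n ℂ) : traceNorm (A - B) = traceNorm (B - A) := by
  rw [← neg_sub, traceNorm_neg]

lemma traceNorm_sum_smul_le {ι : Type*} [Fintype ι] {A : ι → Matrix n n ℂ}
    (hA : ∀ x, (A x).IsHermitian) {c : ι → ℝ} (hc : ∀ x, 0 ≤ c x) :
    traceNorm (∑ x, (c x : ℂ) • A x) ≤ ∑ x, c x * traceNorm (A x) := by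
  have hB : (∑ x, (c x : ℂ) • A x).IsHermitian :=
    isSelfAdjoint_sum _ fun x _ => (hA x).smul (Complex.conj_ofReal (c x))
  -- in the eigenbasis of the sum its trace norm is the `ℓ¹` norm of the diagonal, which is
  -- linear in the summands and bounded by their trace norms
  set U : Matrix n n ℂ := (hB.eigenvectorUnitary : Matrix n n ℂ)
  have hdiag (i : n) : ((star U * (∑ x, (c x : ℂ) • A x) * U) i i).re =
      ∑ x, c x * ((star U * A x * U) i i).re := by
    simp only [Matrix.mul_sum, Matrix.sum_mul, Matrix.mul_smul, Matrix.smul_mul, Matrix.sum_apply,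
      Matrix.smul_apply, Complex.re_sum, smul_eq_mul, Complex.re_ofReal_mul]
  rw [hB.traceNorm_eq_sum_abs_eigenvalues]
  calc ∑ i, |hB.eigenvalues i| = ∑ i, |∑ x, c x * ((star U * A x * U) i i).re| := by
        simp only [← hdiag, U, hB.re_star_eigenvectorUnitary_mul_mul_apply_self]
    _ ≤ ∑ i, ∑ x, c x * |((star U * A x * U) i i).re| := by
        gcongr with i
        refine (abs_sum_le_sum_abs _ _).trans_eq (Finset.sum_congr rfl fun x _ => ?_)
        rw [abs_mul, abs_of_nonneg (hc x)]
    _ = ∑ x, c x * ∑ i, |((star U * A x * U) i i).re| := by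
        rw [Finset.sum_comm]
        simp only [Finset.mul_sum]
    _ ≤ ∑ x, c x * traceNorm (A x) := by
        gcongr with x
        · exact hc x
        · exact (hA x).sum_abs_re_diag_le_traceNorm hB.eigenvectorUnitary.2

lemma traceNorm_sum_smul_sub_sum_smul_le {ι : Type*} [Fintype ι] {P : ι → ℝ}
    (hP0 : ∀ x, 0 ≤ P x) (hP1 : ∑ x, P x = 1) {ρ σ : ι → Matrix n n ℂ}
    (hρ : ∀ x, (ρ x).IsHermitian) (hσ : ∀ x, (σ x).IsHermitian) {δ : ℝ}
    (hρσ : ∀ x, traceNorm (ρ x - σ x) ≤ δ) :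
    traceNorm (∑ x, (P x : ℂ) • ρ x - ∑ x, (P x : ℂ) • σ x) ≤ δ :=
  calc _ = traceNorm (∑ x, (P x : ℂ) • (ρ x - σ x)) := by
        simp only [smul_sub, Finset.sum_sub_distrib]
    _ ≤ ∑ x, P x * traceNorm (ρ x - σ x) :=
        traceNorm_sum_smul_le (fun x => (hρ x).sub (hσ x)) hP0
    _ ≤ ∑ x, P x * δ := by gcongr with x; exacts [hP0 x, hρσ x]
    _ = δ := by rw [← Finset.sum_mul, hP1, one_mul]

namespace IsDensity

variable {ρ : Matrix n n ℂ}

lemma nonempty (hρ : IsDensity ρ) : Nonempty n := by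
  by_contra h
  have := hρ.2
  simp [not_nonempty_iff.1 h, Matrix.trace] at this

lemma isHermitian (hρ : IsDensity ρ) : ρ.IsHermitian :=
  hρ.1.isHermitian

lemma eigenvalues_nonneg (hρ : IsDensity ρ) (i : n) : 0 ≤ hρ.isHermitian.eigenvalues i :=
  hρ.1.eigenvalues_nonneg i

lemma eigenvalues_le_one (hρ : IsDensity ρ) (i : n) : hρ.isHermitian.eigenvalues i ≤ 1 := by
  have hsum : ∑ i, hρ.isHermitian.eigenvalues i = 1 := by
    have := hρ.2
    rw [hρ.isHermitian.trace_eq_sum_eigenvalues] at this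
    simpa using congr_arg Complex.re this
  exact hsum ▸ Finset.single_le_sum (fun j _ => hρ.eigenvalues_nonneg j) (Finset.mem_univ i)

lemma sum_smul {ι : Type*} [Fintype ι] {P : ι → ℝ} (hP0 : ∀ x, 0 ≤ P x) (hP1 : ∑ x, P x = 1)
    {ρ : ι → Matrix n n ℂ} (hρ : ∀ x, IsDensity (ρ x)) : IsDensity (∑ x, (P x : ℂ) • ρ x) := by
  refine ⟨posSemidef_sum _ fun x _ => (hρ x).1.smul (Complex.zero_le_real.2 (hP0 x)), ?_⟩
  simp only [trace_sum, trace_smul, (hρ _).2, smul_eq_mul, mul_one]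
  exact_mod_cast hP1

end IsDensity

lemma vnEntropy_sub_vnEntropy_le {ρ σ : Matrix n n ℂ} (hρ : IsDensity ρ) (hσ : IsDensity σ)
    {δ : ℝ} (hδ0 : 0 < δ) (hδ1 : δ ≤ Real.exp (-1)) (hρσ : traceNorm (ρ - σ) ≤ δ) :
    vnEntropy σ - vnEntropy ρ ≤ δ * Real.log (Fintype.card n / δ) := by
  have := hρ.nonempty
  set U := hρ.isHermitian.eigenvectorUnitary
  set q : n → ℝ := fun i => ((star (U : Matrix n n ℂ) * σ * U) i i).re
  -- the diagonal of `σ` in the eigenbasis of `ρ` has at least the entropy of `σ` (Schur concavity)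
  have hσq : vnEntropy σ ≤ ∑ i, Real.negMulLog (q i) := by
    obtain ⟨M, hM, hq⟩ := hσ.isHermitian.exists_mem_doublyStochastic_re_diag_eq U.2
    rw [hσ.isHermitian.vnEntropy_eq_sum_negMulLog, show q = _ from hq]
    exact Real.concaveOn_negMulLog.sum_map_le_sum_map_mulVec hM hσ.eigenvalues_nonneg
  have hq0 (i : n) : 0 ≤ q i := by
    have := (hσ.1.conjTranspose_mul_mul_same (U : Matrix n n ℂ)).diag_nonneg (i := i)
    exact (Complex.nonneg_iff.1 this).1
  have hpq : ∑ i, |hρ.isHermitian.eigenvalues i - q i| ≤ δ :=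
    calc _ = ∑ i, |((star (U : Matrix n n ℂ) * (ρ - σ) * U) i i).re| := by
          simp only [q, Matrix.mul_sub, Matrix.sub_mul, Matrix.sub_apply, Complex.sub_re,
            hρ.isHermitian.re_star_eigenvectorUnitary_mul_mul_apply_self, U]
      _ ≤ traceNorm (ρ - σ) :=
          (hρ.isHermitian.sub hσ.isHermitian).sum_abs_re_diag_le_traceNorm U.2
      _ ≤ δ := hρσ
  rw [hρ.isHermitian.vnEntropy_eq_sum_negMulLog]
  linarith [Real.sum_negMulLog_sub_sum_negMulLog_le hρ.eigenvalues_nonneg hρ.eigenvalues_le_one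
    hq0 hpq hδ0 hδ1]

lemma abs_vnEntropy_sub_vnEntropy_le {ρ σ : Matrix n n ℂ} (hρ : IsDensity ρ) (hσ : IsDensity σ)
    {δ : ℝ} (hδ0 : 0 < δ) (hδ1 : δ ≤ Real.exp (-1)) (hρσ : traceNorm (ρ - σ) ≤ δ) :
    |vnEntropy ρ - vnEntropy σ| ≤ δ * Real.log (Fintype.card n / δ) :=
  abs_sub_le_iff.2
    ⟨vnEntropy_sub_vnEntropy_le hσ hρ hδ0 hδ1 (traceNorm_sub_comm ρ σ ▸ hρσ),
      vnEntropy_sub_vnEntropy_le hρ hσ hδ0 hδ1 hρσ⟩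

end Covert

/-- continuity of the Holevo information under trace-norm perturbation
of the states of the ensemble. -/
theorem stmt15 {d : ℕ} (X : Type*) [Fintype X]
    (P : X → ℝ) (hP0 : ∀ x, 0 ≤ P x) (hP1 : ∑ x, P x = 1)
    (ρ σ : X → Matrix (Fin d) (Fin d) ℂ)
    (hρ : ∀ x, IsDensity (ρ x)) (hσ : ∀ x, IsDensity (σ x))
    (δ : ℝ) (hδ0 : 0 < δ) (hδ1 : δ ≤ Real.exp (-1))
    (hclose : ∀ x, traceNorm (ρ x - σ x) ≤ δ) :
    holevoInfo P σ ≥ holevoInfo P ρ - 2 * δ * Real.log ((d : ℝ) / δ) := by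
  set L := Real.log ((d : ℝ) / δ)
  have hfannes {ρ' σ' : Matrix (Fin d) (Fin d) ℂ} (hρ' : IsDensity ρ') (hσ' : IsDensity σ')
      (h : traceNorm (ρ' - σ') ≤ δ) : |vnEntropy ρ' - vnEntropy σ'| ≤ δ * L := by
    simpa only [Fintype.card_fin] using abs_vnEntropy_sub_vnEntropy_le hρ' hσ' hδ0 hδ1 h
  have hmix := abs_le.1 <| hfannes (IsDensity.sum_smul hP0 hP1 hρ) (IsDensity.sum_smul hP0 hP1 hσ)
    (traceNorm_sum_smul_sub_sum_smul_le hP0 hP1 (fun x => (hρ x).isHermitian)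
      (fun x => (hσ x).isHermitian) hclose)
  have hcond : ∑ x, P x * vnEntropy (σ x) - ∑ x, P x * vnEntropy (ρ x) ≤ δ * L :=
    calc _ = ∑ x, P x * (vnEntropy (σ x) - vnEntropy (ρ x)) := by
          simp only [mul_sub, Finset.sum_sub_distrib]
      _ ≤ ∑ x, P x * (δ * L) := by
          gcongr with x
          · exact hP0 x
          · exact le_of_abs_le ((abs_sub_comm _ _).trans_le (hfannes (hρ x) (hσ x) (hclose x)))
      _ = δ * L := by rw [← Finset.sum_mul, hP1, one_mul]
  rw [holevoInfo, holevoInfo]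
  linarith [hmix.1]
end
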